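/- arXiv:1812.03703 — 2 statements merged into one kernel-verified Lean document; each statement's English description precedes it below -/
import Mathlib

section
/- Fix natural numbers n ≥ 1 and a real ε with 0 ≤ ε < 1. Consider a single-bit delegation scheme (responses are single bits b ∈ {0,1}) whose family of target probabilities is given by DQC1 acceptance probabilities: for each x ∈ X there is a unitary V_x on ℂ^{2^n} and p x := p_{V_x}^{DQC1}(1). Assume the scheme is ε-correct and blind. Fix x₀ ∈ X and a key k₀ in the support of K_{x₀}, and set a := E x₀ k₀. For x ∈ X define η(x) := Pr_{k ~ K_x}[E x k = a] and the acceptance probability p_acc(x) := Σ_k K_x(k) · [E x k = a] · Pr_{b ~ q_a}[D x k b = 1]. Then for every x ∈ X: η(x) > 0, and η(x)(1−ε)·(p x) ≤ p_acc(x) ≤ η(x)(1+ε)·(p x); consequently p_acc(x) > 0 whenever p x > 0, and p_acc(x) = 0 whenever p x = 0. (This is the reduction underlying Theorem 4: a correct and blind classical delegation of DQC1 sampling yields a nondeterministic-style acceptance criterion deciding positivity of p_{V_x}^{DQC1}(1).) -/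
open Kronecker Matrix

/-- Rank-one projector `|i⟩⟨i|` on a single qubit. -/
noncomputable def qproj (i : Fin 2) : Matrix (Fin 2) (Fin 2) ℂ :=
  Matrix.single i i 1

/-- The DQC1 acceptance probability
`p_V^{DQC1}(1) = Tr[(|1⟩⟨1| ⊗ I) V (|0⟩⟨0| ⊗ I/2^m) V†]`
for a unitary `V` on one clean qubit together with `m` maximally mixed qubits. -/
noncomputable def dqc1Prob (m : ℕ)
    (V : Matrix (Fin 2 × Fin (2 ^ m)) (Fin 2 × Fin (2 ^ m)) ℂ) : ℝ :=
  (Matrix.trace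
    ((qproj 1 ⊗ₖ (1 : Matrix (Fin (2 ^ m)) (Fin (2 ^ m)) ℂ)) *
      (V * ((qproj 0 ⊗ₖ (((2 : ℂ) ^ m)⁻¹ • (1 : Matrix (Fin (2 ^ m)) (Fin (2 ^ m)) ℂ))) *
        Vᴴ)))).re

/-! Blindness gives, for every input `x`, a key in the support of `K x` producing the fixed message
`a`, so `η x > 0`. Every key that contributes to `η x` and `pacc x` lies in the support of `K x` and
produces `a`, so by correctness its acceptance probability lies in `[(1 - ε) p x, (1 + ε) p x]`;
averaging these bounds with the weights of `η x` sandwiches `pacc x`. -/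

theorem Finset.sum_mul_le_sum_mul_of_le_of_pos {ι : Type*} {s : Finset ι} {w f g : ι → ℝ}
    (hw : ∀ i ∈ s, 0 ≤ w i) (hfg : ∀ i ∈ s, 0 < w i → f i ≤ g i) :
    ∑ i ∈ s, w i * f i ≤ ∑ i ∈ s, w i * g i := by
  refine Finset.sum_le_sum fun i hi => ?_
  rcases (hw i hi).lt_or_eq with hpos | hzero
  · exact mul_le_mul_of_nonneg_left (hfg i hi hpos) hpos.le
  · simp [← hzero]

theorem mul_le_and_le_mul_of_abs_sub_le_mul {c p ε : ℝ} (h : |c - p| ≤ ε * p) :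
    (1 - ε) * p ≤ c ∧ c ≤ (1 + ε) * p := by
  rw [abs_sub_le_iff] at h
  constructor <;> linarith

theorem blind_dqc1_delegation_single_bit_general
    (ε : ℝ) (hε1 : ε < 1)
    (X Key A : Type) [Fintype Key] [DecidableEq A]
    -- key generation distribution
    (K : X → Key → ℝ)
    (hKnn : ∀ x k, 0 ≤ K x k)
    -- encryption
    (E : X → Key → A)
    -- server response distribution (responses are single bits)
    (q : A → Bool → ℝ)
    -- decryption
    (D : X → Key → Bool → Bool)
    (p : X → ℝ)
    -- ε-correctness, for every key in the support of K_x
    (hcorr1 : ∀ x k, 0 < K x k →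
      |(∑ b, q (E x k) b * (if D x k b = true then 1 else 0)) - p x| ≤ ε * p x)
    -- blindness: supports of the pushforwards of K_x under E x coincide
    (hblind : ∀ x₁ x₂ a,
      (∃ k, 0 < K x₁ k ∧ E x₁ k = a) ↔ (∃ k, 0 < K x₂ k ∧ E x₂ k = a))
    -- a fixed input, key in its support, and resulting message
    (x₀ : X) (k₀ : Key) (hk₀ : 0 < K x₀ k₀) (a : A) (ha : a = E x₀ k₀)
    -- η and the acceptance probability
    (η pacc : X → ℝ)
    (hη : ∀ x, η x = ∑ k, K x k * (if E x k = a then 1 else 0))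
    (hpacc : ∀ x, pacc x = ∑ k, K x k * (if E x k = a then 1 else 0) *
      (∑ b, q a b * (if D x k b = true then 1 else 0))) :
    ∀ x, 0 < η x ∧
      (η x * (1 - ε) * p x ≤ pacc x ∧ pacc x ≤ η x * (1 + ε) * p x) ∧
      (0 < p x → 0 < pacc x) ∧ (p x = 0 → pacc x = 0) := by
  intro x
  set w : Key → ℝ := fun k => K x k * if E x k = a then 1 else 0
  have hw : ∀ k ∈ Finset.univ, 0 ≤ w k := fun k _ => mul_nonneg (hKnn x k) (by positivity)
  obtain ⟨k₁, hk₁, hEk₁⟩ := (hblind x₀ x a).mp ⟨k₀, hk₀, ha.symm⟩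
  have hη_pos : 0 < η x :=
    hη x ▸ Finset.sum_pos' hw ⟨k₁, Finset.mem_univ _, by simpa [w, hEk₁] using hk₁⟩
  have hacc : ∀ k ∈ Finset.univ, 0 < w k →
      (1 - ε) * p x ≤ ∑ b, q a b * (if D x k b = true then 1 else 0) ∧
        ∑ b, q a b * (if D x k b = true then 1 else 0) ≤ (1 + ε) * p x := by
    intro k _ hwk
    have hEk : E x k = a := by by_contra hne; simp [w, hne] at hwk
    have hKk : 0 < K x k := by simpa [w, hEk] using hwk
    exact mul_le_and_le_mul_of_abs_sub_le_mul (hEk ▸ hcorr1 x k hKk)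
  have hlow : η x * (1 - ε) * p x ≤ pacc x := by
    rw [hη, hpacc, mul_assoc, Finset.sum_mul]
    exact Finset.sum_mul_le_sum_mul_of_le_of_pos hw fun k hk hwk => (hacc k hk hwk).1
  have hhigh : pacc x ≤ η x * (1 + ε) * p x := by
    rw [hη, hpacc, mul_assoc, Finset.sum_mul]
    exact Finset.sum_mul_le_sum_mul_of_le_of_pos hw fun k hk hwk => (hacc k hk hwk).2
  refine ⟨hη_pos, ⟨hlow, hhigh⟩, fun hpx => ?_, fun hpx => ?_⟩
  · exact (mul_pos (mul_pos hη_pos (sub_pos.mpr hε1)) hpx).trans_le hlow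
  · rw [hpx, mul_zero] at hlow hhigh
    exact le_antisymm hhigh hlow

/-- A correct and blind single-bit classical delegation of DQC1 sampling yields a
nondeterministic-style acceptance criterion deciding positivity of `p_{V_x}^{DQC1}(1)`:
for every input `x`, the probability `η x` of reproducing the fixed message `a` is
positive, and the acceptance probability `pacc x` is multiplicatively sandwiched
between `η x (1-ε) p x` and `η x (1+ε) p x`; hence `pacc x > 0` iff `p x > 0`. -/
theorem blind_dqc1_delegation_single_bit
    (n : ℕ) (hn : 1 ≤ n) (ε : ℝ) (hε0 : 0 ≤ ε) (hε1 : ε < 1)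
    (X Key A : Type) [Fintype X] [Fintype Key] [Fintype A] [DecidableEq A]
    -- key generation distribution
    (K : X → Key → ℝ)
    (hKnn : ∀ x k, 0 ≤ K x k) (hKsum : ∀ x, ∑ k, K x k = 1)
    -- encryption
    (E : X → Key → A)
    -- server response distribution (responses are single bits)
    (q : A → Bool → ℝ)
    (hqnn : ∀ a b, 0 ≤ q a b) (hqsum : ∀ a, ∑ b, q a b = 1)
    -- decryption
    (D : X → Key → Bool → Bool)
    -- target probabilities: DQC1 acceptance probabilities of unitaries V_x
    (V : X → Matrix (Fin 2 × Fin (2 ^ (n - 1))) (Fin 2 × Fin (2 ^ (n - 1))) ℂ)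
    (hV : ∀ x, V x ∈ Matrix.unitaryGroup (Fin 2 × Fin (2 ^ (n - 1))) ℂ)
    (p : X → ℝ) (hp : ∀ x, p x = dqc1Prob (n - 1) (V x))
    -- ε-correctness, for every key in the support of K_x
    (hcorr1 : ∀ x k, 0 < K x k →
      |(∑ b, q (E x k) b * (if D x k b = true then 1 else 0)) - p x| ≤ ε * p x)
    (hcorr0 : ∀ x k, 0 < K x k →
      |(∑ b, q (E x k) b * (if D x k b = false then 1 else 0)) - (1 - p x)| ≤
        ε * (1 - p x))
    -- blindness: supports of the pushforwards of K_x under E x coincide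
    (hblind : ∀ x₁ x₂ a,
      (∃ k, 0 < K x₁ k ∧ E x₁ k = a) ↔ (∃ k, 0 < K x₂ k ∧ E x₂ k = a))
    -- a fixed input, key in its support, and resulting message
    (x₀ : X) (k₀ : Key) (hk₀ : 0 < K x₀ k₀) (a : A) (ha : a = E x₀ k₀)
    -- η and the acceptance probability
    (η pacc : X → ℝ)
    (hη : ∀ x, η x = ∑ k, K x k * (if E x k = a then 1 else 0))
    (hpacc : ∀ x, pacc x = ∑ k, K x k * (if E x k = a then 1 else 0) *
      (∑ b, q a b * (if D x k b = true then 1 else 0))) :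
    ∀ x, 0 < η x ∧
      (η x * (1 - ε) * p x ≤ pacc x ∧ pacc x ≤ η x * (1 + ε) * p x) ∧
      (0 < p x → 0 < pacc x) ∧ (p x = 0 → pacc x = 0) :=
  blind_dqc1_delegation_single_bit_general ε hε1 X Key A K hKnn E q D p hcorr1 hblind x₀ k₀ hk₀ a ha
    η pacc hη hpacc
end

section
/- Fix natural numbers n ≥ 1, m ≥ 1, and a real ε with 0 ≤ ε < 1. Consider a string-response delegation scheme (responses are bit strings b ∈ {0,1}^m) whose family of target probabilities is given by DQC1 acceptance probabilities: for each x ∈ X there is a unitary V_x on ℂ^{2^n} and p x := p_{V_x}^{DQC1}(1). Assume the scheme is ε-correct and blind. Fix x₀ ∈ X and a key k₀ in the support of K_{x₀}, and set a := E x₀ k₀. For x ∈ X define η(x) := Pr_{k ~ K_x}[E x k = a] and the acceptance probability p_acc(x) := Σ_k K_x(k) · [E x k = a] · Pr_{b ~ q_a}[D x k b = 1]. Then for every x ∈ X: η(x) > 0, and η(x)(1−ε)·(p x) ≤ p_acc(x) ≤ η(x)(1+ε)·(p x); consequently p_acc(x) > 0 whenever p x > 0, and p_acc(x) = 0 whenever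 p x = 0. (This is the reduction underlying Theorem 6, where the server returns a polynomial-length bit string rather than a single bit.) -/
open Kronecker Matrix

/-!
The acceptance probability is an average, over the keys `k` with `E x k = a` and with weights
`K x k`, of the probabilities `Pr[D x k b = 1]`. Correctness puts each of these within `ε · p x`
of `p x`, so the average is within `η x · ε · p x` of `η x · p x`; blindness supplies a key of
`x` encrypting to `a`, which makes the total weight `η x` positive.
-/

open Finset

section WeightedAverage

variable {ι : Type*} [Fintype ι]

theorem abs_sum_mul_sub_sum_mul_le {w f : ι → ℝ} {c r : ℝ} (hw : ∀ i, 0 ≤ w i)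
    (hf : ∀ i, 0 < w i → |f i - c| ≤ r) :
    |∑ i, w i * f i - (∑ i, w i) * c| ≤ (∑ i, w i) * r := by
  have hterm : ∀ i, |w i * (f i - c)| ≤ w i * r := by
    intro i
    rw [abs_mul, abs_of_nonneg (hw i)]
    rcases (hw i).eq_or_lt with h | h
    · simp [← h]
    · exact mul_le_mul_of_nonneg_left (hf i h) (hw i)
  calc |∑ i, w i * f i - (∑ i, w i) * c| = |∑ i, w i * (f i - c)| := by
        simp only [mul_sub, sum_sub_distrib, sum_mul]
    _ ≤ ∑ i, |w i * (f i - c)| := abs_sum_le_sum_abs _ _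
    _ ≤ ∑ i, w i * r := sum_le_sum fun i _ => hterm i
    _ = (∑ i, w i) * r := (sum_mul ..).symm

theorem sum_mul_ite_pos {w : ι → ℝ} {P : ι → Prop} [DecidablePred P] (hw : ∀ i, 0 ≤ w i)
    (h : ∃ i, 0 < w i ∧ P i) : 0 < ∑ i, w i * if P i then 1 else 0 := by
  obtain ⟨i, hwi, hPi⟩ := h
  refine sum_pos' (fun j _ => mul_nonneg (hw j) (by split_ifs <;> norm_num)) ⟨i, mem_univ i, ?_⟩
  simpa [hPi] using hwi

end WeightedAverage

theorem pos_and_of_mul_ite_pos {w : ℝ} {P : Prop} [Decidable P]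
    (h : 0 < w * if P then 1 else 0) : 0 < w ∧ P := by
  by_cases hP : P
  · simp_all
  · simp [hP] at h

theorem blind_dqc1_delegation_string_response_general
    (m : ℕ) (ε : ℝ) (hε1 : ε < 1)
    (X Key A : Type) [Fintype Key] [DecidableEq A]
    -- key generation distribution
    (K : X → Key → ℝ)
    (hKnn : ∀ x k, 0 ≤ K x k)
    -- encryption
    (E : X → Key → A)
    -- server response distribution (responses are bit strings of length m)
    (q : A → (Fin m → Bool) → ℝ)
    -- decryption
    (D : X → Key → (Fin m → Bool) → Bool)
    -- target probabilities: DQC1 acceptance probabilities of unitaries V_x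
    (p : X → ℝ)
    -- ε-correctness, for every key in the support of K_x
    (hcorr1 : ∀ x k, 0 < K x k →
      |(∑ b, q (E x k) b * (if D x k b = true then 1 else 0)) - p x| ≤ ε * p x)
    -- blindness: supports of the pushforwards of K_x under E x coincide
    (hblind : ∀ x₁ x₂ a,
      (∃ k, 0 < K x₁ k ∧ E x₁ k = a) ↔ (∃ k, 0 < K x₂ k ∧ E x₂ k = a))
    -- a fixed input, key in its support, and resulting message
    (x₀ : X) (k₀ : Key) (hk₀ : 0 < K x₀ k₀) (a : A) (ha : a = E x₀ k₀)
    -- η and the acceptance probability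
    (η pacc : X → ℝ)
    (hη : ∀ x, η x = ∑ k, K x k * (if E x k = a then 1 else 0))
    (hpacc : ∀ x, pacc x = ∑ k, K x k * (if E x k = a then 1 else 0) *
      (∑ b, q a b * (if D x k b = true then 1 else 0))) :
    ∀ x, 0 < η x ∧
      (η x * (1 - ε) * p x ≤ pacc x ∧ pacc x ≤ η x * (1 + ε) * p x) ∧
      (0 < p x → 0 < pacc x) ∧ (p x = 0 → pacc x = 0) := by
  intro x
  have hηpos : 0 < η x := by
    rw [hη]
    exact sum_mul_ite_pos (hKnn x) ((hblind x₀ x a).mp ⟨k₀, hk₀, ha.symm⟩)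
  have hclose : |pacc x - η x * p x| ≤ η x * (ε * p x) := by
    rw [hη, hpacc]
    refine abs_sum_mul_sub_sum_mul_le
      (fun k => mul_nonneg (hKnn x k) (by split_ifs <;> norm_num)) fun k hk => ?_
    obtain ⟨hKk, hEk⟩ := pos_and_of_mul_ite_pos hk
    simpa only [hEk] using hcorr1 x k hKk
  obtain ⟨hupper, hlower⟩ := abs_sub_le_iff.mp hclose
  have hsandwich : η x * (1 - ε) * p x ≤ pacc x ∧ pacc x ≤ η x * (1 + ε) * p x :=
    ⟨by linarith, by linarith⟩
  refine ⟨hηpos, hsandwich, fun hpx => ?_, fun hpx => ?_⟩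
  · exact (mul_pos (mul_pos hηpos (sub_pos.2 hε1)) hpx).trans_le hsandwich.1
  · rw [hpx, mul_zero, mul_zero] at hsandwich
    exact le_antisymm hsandwich.2 hsandwich.1

/-- A correct and blind string-response classical delegation of DQC1 sampling yields a
nondeterministic-style acceptance criterion deciding positivity of `p_{V_x}^{DQC1}(1)`:
for every input `x`, the probability `η x` of reproducing the fixed message `a` is
positive, and the acceptance probability `pacc x` is multiplicatively sandwiched
between `η x (1-ε) p x` and `η x (1+ε) p x`; hence `pacc x > 0` iff `p x > 0`. -/
theorem blind_dqc1_delegation_string_response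
    (n m : ℕ) (hn : 1 ≤ n) (hm : 1 ≤ m) (ε : ℝ) (hε0 : 0 ≤ ε) (hε1 : ε < 1)
    (X Key A : Type) [Fintype X] [Fintype Key] [Fintype A] [DecidableEq A]
    -- key generation distribution
    (K : X → Key → ℝ)
    (hKnn : ∀ x k, 0 ≤ K x k) (hKsum : ∀ x, ∑ k, K x k = 1)
    -- encryption
    (E : X → Key → A)
    -- server response distribution (responses are bit strings of length m)
    (q : A → (Fin m → Bool) → ℝ)
    (hqnn : ∀ a b, 0 ≤ q a b) (hqsum : ∀ a, ∑ b, q a b = 1)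
    -- decryption
    (D : X → Key → (Fin m → Bool) → Bool)
    -- target probabilities: DQC1 acceptance probabilities of unitaries V_x
    (V : X → Matrix (Fin 2 × Fin (2 ^ (n - 1))) (Fin 2 × Fin (2 ^ (n - 1))) ℂ)
    (hV : ∀ x, V x ∈ Matrix.unitaryGroup (Fin 2 × Fin (2 ^ (n - 1))) ℂ)
    (p : X → ℝ) (hp : ∀ x, p x = dqc1Prob (n - 1) (V x))
    -- ε-correctness, for every key in the support of K_x
    (hcorr1 : ∀ x k, 0 < K x k →
      |(∑ b, q (E x k) b * (if D x k b = true then 1 else 0)) - p x| ≤ ε * p x)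
    (hcorr0 : ∀ x k, 0 < K x k →
      |(∑ b, q (E x k) b * (if D x k b = false then 1 else 0)) - (1 - p x)| ≤
        ε * (1 - p x))
    -- blindness: supports of the pushforwards of K_x under E x coincide
    (hblind : ∀ x₁ x₂ a,
      (∃ k, 0 < K x₁ k ∧ E x₁ k = a) ↔ (∃ k, 0 < K x₂ k ∧ E x₂ k = a))
    -- a fixed input, key in its support, and resulting message
    (x₀ : X) (k₀ : Key) (hk₀ : 0 < K x₀ k₀) (a : A) (ha : a = E x₀ k₀)
    -- η and the acceptance probability
    (η pacc : X → ℝ)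
    (hη : ∀ x, η x = ∑ k, K x k * (if E x k = a then 1 else 0))
    (hpacc : ∀ x, pacc x = ∑ k, K x k * (if E x k = a then 1 else 0) *
      (∑ b, q a b * (if D x k b = true then 1 else 0))) :
    ∀ x, 0 < η x ∧
      (η x * (1 - ε) * p x ≤ pacc x ∧ pacc x ≤ η x * (1 + ε) * p x) ∧
      (0 < p x → 0 < pacc x) ∧ (p x = 0 → pacc x = 0) :=
  blind_dqc1_delegation_string_response_general m ε hε1 X Key A K hKnn E q D p hcorr1 hblind x₀ k₀
    hk₀ a ha η pacc hη hpacc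
end
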